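/- Let KB = (∅, Π) be a normal logic program. Then the well-founded semantics of KB as an FOL-program coincides with the standard well-founded semantics of the normal logic program Π: lfp(W_KB) = lfp(W_Π). -/

import Mathlib

/-!
Formalization of FOL-programs (combined knowledge bases `KB = (L, Π)` of a
first-order theory and a ground rule base) and their well-founded semantics.

* The Herbrand base `HB_Π` is modelled as a type `Atom`; each atom `a` has an
  associated first-order sentence `toSent a`, and `inOmega a` says whether the
  predicate symbol of `a` is in the shared set `Ω` (atoms with `¬ inOmega a`
  are the *ordinary* atoms).
* The field `atomic` expresses that atoms are genuinely atomic ground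
  sentences: every consistent set of literals is a satisfiable theory.
* Literals `Lit Atom = Atom ⊕ Atom`: `Sum.inl a` is the atom `a`,
  `Sum.inr a` is the negated atom `¬ a`.
-/

open FirstOrder

namespace FOLProg

variable {L : FirstOrder.Language} {Atom : Type*}

/-- Literals over the Herbrand base: `Sum.inl a` is `a`, `Sum.inr a` is `¬ a`. -/
abbrev Lit (Atom : Type*) := Atom ⊕ Atom

/-- A body element of a rule: an atom of the Herbrand base, or an FOL sentence. -/
inductive BElem (L : FirstOrder.Language) (Atom : Type*) where
  | atom : Atom → BElem L Atom
  | fol : L.Sentence → BElem L Atom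

/-- A ground rule `head ← pos, not neg`. -/
structure Rule (L : FirstOrder.Language) (Atom : Type*) where
  head : Atom
  pos : Set (BElem L Atom)
  neg : Set (BElem L Atom)

/-- `S⁺`. -/
def litPos (S : Set (Lit Atom)) : Set Atom := {a | Sum.inl a ∈ S}

/-- `S⁻`. -/
def litNeg (S : Set (Lit Atom)) : Set Atom := {a | Sum.inr a ∈ S}

/-- A set of literals is consistent: `S⁺ ∩ S⁻ = ∅`. -/
def LitConsistent (S : Set (Lit Atom)) : Prop := litPos S ∩ litNeg S = ∅

/-- The theory of *all* literals of `S` (positive atoms as their sentences,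
negative ones negated). -/
def litTheory (toSent : Atom → L.Sentence) (S : Set (Lit Atom)) : L.Theory :=
  toSent '' litPos S ∪ (fun a => (toSent a).not) '' litNeg S

/-- An FOL-program `KB = (L, Π)` over the Herbrand base `Atom`. -/
structure KB (L : FirstOrder.Language) (Atom : Type*) where
  /-- the first-order theory `L` -/
  theory : L.Theory
  /-- the first-order sentence of each ground atom of the Herbrand base -/
  toSent : Atom → L.Sentence
  /-- whether the predicate symbol of an atom belongs to `Ω` -/
  inOmega : Atom → Prop
  /-- the rule base `Π` -/
  rules : Set (Rule L Atom)
  /-- atoms are atomic: any consistent set of ground literals is satisfiable -/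
  atomic : ∀ S : Set (Lit Atom), LitConsistent S → (litTheory toSent S).IsSatisfiable

namespace KB

variable (kb : KB L Atom)

/-- `S|_Ω`, as a first-order theory. -/
def restrict (S : Set (Lit Atom)) : L.Theory :=
  kb.toSent '' {a | Sum.inl a ∈ S ∧ kb.inOmega a} ∪
    (fun a => (kb.toSent a).not) '' {a | Sum.inr a ∈ S ∧ kb.inOmega a}

/-- The theory `L ∪ S|_Ω`. -/
def extTheory (S : Set (Lit Atom)) : L.Theory := kb.theory ∪ kb.restrict S

/-- `S` is consistent with `L` (equivalently, `S ∪ L` is consistent):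
`S` is a consistent set of literals and `L ∪ S|_Ω` is satisfiable. -/
def ConsistentWith (S : Set (Lit Atom)) : Prop :=
  LitConsistent S ∧ (kb.extTheory S).IsSatisfiable

/-- The FOL-formulas among a set of body elements, as sentences: the explicit
FOL-formulas together with the (sentences of the) non-ordinary atoms. -/
def folOf (s : Set (BElem L Atom)) : Set L.Sentence :=
  {φ | BElem.fol φ ∈ s} ∪ kb.toSent '' {a | BElem.atom a ∈ s ∧ kb.inOmega a}

/-- Conditions (a) and (b) of the definition of an unfounded set `U` of `KB`
relative to a set of literals `I` (the case where `I ∪ L` is consistent). -/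
def UnfoundedCond (I : Set (Lit Atom)) (U : Set Atom) : Prop :=
  ∀ H ∈ U,
    (∀ r ∈ kb.rules, r.head = H →
      -- (i) `¬A ∈ I ∪ ¬.U` for some ordinary atom `A ∈ pos(r)`
      (∃ a, BElem.atom a ∈ r.pos ∧ ¬ kb.inOmega a ∧ (Sum.inr a ∈ I ∨ a ∈ U)) ∨
      -- (ii) `B ∈ I` for some ordinary atom `B ∈ neg(r)`
      (∃ b, BElem.atom b ∈ r.neg ∧ ¬ kb.inOmega b ∧ Sum.inl b ∈ I) ∨
      -- (iii) some FOL-formula `A ∈ pos(r)` is not entailed under any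
      -- consistent extension of `I ∪ ¬.U`
      (∃ φ ∈ kb.folOf r.pos, ∀ S : Set (Lit Atom), LitConsistent S →
        I ∪ Sum.inr '' U ⊆ S → ¬ kb.extTheory S ⊨ᵇ φ) ∨
      -- (iv) some FOL-formula `A ∈ neg(r)` with `L ∪ I|_Ω ⊨ A`
      (∃ φ ∈ kb.folOf r.neg, kb.extTheory I ⊨ᵇ φ)) ∧
    -- (b) `L ∪ S|_Ω ⊭ H` for all consistent `S ⊇ I ∪ ¬.U`
    (∀ S : Set (Lit Atom), LitConsistent S → I ∪ Sum.inr '' U ⊆ S →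
      ¬ kb.extTheory S ⊨ᵇ kb.toSent H)

/-- `U` is an unfounded set of `KB` relative to `I`.  If `I ∪ L` is
inconsistent, the unfounded set is (by definition) the whole Herbrand base. -/
def IsUnfounded (I : Set (Lit Atom)) (U : Set Atom) : Prop :=
  (kb.ConsistentWith I ∧ kb.UnfoundedCond I U) ∨
    (¬ kb.ConsistentWith I ∧ U = Set.univ)

/-- The consequence operator `T_KB`. -/
def TOp (I : Set (Lit Atom)) : Set Atom :=
  {H | ¬ kb.ConsistentWith I ∨
    -- (a) some rule `r` with `head(r) = H` whose body holds
    (∃ r ∈ kb.rules, r.head = H ∧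
      (∀ a, BElem.atom a ∈ r.pos → ¬ kb.inOmega a → Sum.inl a ∈ I) ∧
      (∀ a, BElem.atom a ∈ r.neg → ¬ kb.inOmega a → Sum.inr a ∈ I) ∧
      (∀ φ ∈ kb.folOf r.pos, kb.extTheory I ⊨ᵇ φ) ∧
      (∀ φ ∈ kb.folOf r.neg, ∀ S : Set (Lit Atom), LitConsistent S → I ⊆ S →
        ¬ kb.extTheory S ⊨ᵇ φ)) ∨
    -- (b) `L ∪ I|_Ω ⊨ H`
    kb.extTheory I ⊨ᵇ kb.toSent H}

/-- `U_KB(I)`: the greatest unfounded set of `KB` relative to `I`, i.e. the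
union of all unfounded sets of `KB` relative to `I`. -/
def UOp (I : Set (Lit Atom)) : Set Atom := ⋃₀ {U | kb.IsUnfounded I U}

/-- `Z_KB(I) = {A ∈ HB_Π | L ∪ I|_Ω ⊨ ¬A}`: direct negative consequences. -/
def ZOp (I : Set (Lit Atom)) : Set Atom :=
  {a | kb.extTheory I ⊨ᵇ (kb.toSent a).not}

/-- `W_KB(I) = T_KB(I) ∪ ¬.U_KB(I) ∪ ¬.Z_KB(I)`. -/
def WOp (I : Set (Lit Atom)) : Set (Lit Atom) :=
  Sum.inl '' kb.TOp I ∪ Sum.inr '' kb.UOp I ∪ Sum.inr '' kb.ZOp I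

/-- The well-founded semantics of `KB`: the least fixpoint of `W_KB`
(by Knaster–Tarski, the intersection of all prefixed points). -/
def wfs : Set (Lit Atom) := sInf {I | kb.WOp I ⊆ I}

/-! ### Standard notions for normal logic programs -/

/-- `KB = (∅, Π)` is a normal logic program: the first-order theory is empty
and every rule has only ordinary atoms in its head and body (hence `Ω = ∅`). -/
def IsNormal : Prop :=
  kb.theory = ∅ ∧ (∀ a : Atom, ¬ kb.inOmega a) ∧
    ∀ r ∈ kb.rules, ∀ e ∈ r.pos ∪ r.neg, ∃ a, e = BElem.atom a

/-- The standard immediate-consequence operator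
`T_Π(S) = {head(r) | r ∈ Π, pos(r) ∪ ¬.neg(r) ⊆ S}` of a normal program. -/
def StdT (S : Set (Lit Atom)) : Set Atom :=
  {H | ∃ r ∈ kb.rules, r.head = H ∧
    (∀ a, BElem.atom a ∈ r.pos → Sum.inl a ∈ S) ∧
    (∀ a, BElem.atom a ∈ r.neg → Sum.inr a ∈ S)}

/-- `U` is an unfounded set of the normal program `Π` w.r.t. `S` in the
standard sense. -/
def StdUnfounded (S : Set (Lit Atom)) (U : Set Atom) : Prop :=
  ∀ a ∈ U, ∀ r ∈ kb.rules, r.head = a →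
    (∃ b, BElem.atom b ∈ r.pos ∧ (Sum.inr b ∈ S ∨ b ∈ U)) ∨
    (∃ b, BElem.atom b ∈ r.neg ∧ Sum.inl b ∈ S)

/-- `U_Π(S)`: the greatest standard unfounded set of `Π` w.r.t. `S`. -/
def StdU (S : Set (Lit Atom)) : Set Atom := ⋃₀ {U | kb.StdUnfounded S U}

/-- `W_Π(S) = T_Π(S) ∪ ¬.U_Π(S)`. -/
def StdW (S : Set (Lit Atom)) : Set (Lit Atom) :=
  Sum.inl '' kb.StdT S ∪ Sum.inr '' kb.StdU S

/-- The standard well-founded semantics `lfp(W_Π)` of the normal program `Π`. -/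
def stdWfs : Set (Lit Atom) := sInf {S | kb.StdW S ⊆ S}

/-! ### Two-valued satisfaction and well-supported answer sets -/

/-- The theory `L ∪ I|_Ω ∪ ¬.Ī|_Ω` of a total interpretation `I ⊆ HB_Π`. -/
def totTheory (I : Set Atom) : L.Theory :=
  kb.theory ∪ kb.toSent '' {a | a ∈ I ∧ kb.inOmega a} ∪
    (fun a => (kb.toSent a).not) '' {a | a ∉ I ∧ kb.inOmega a}

/-- `I ⊨_L e` for a total interpretation `I` and a body element `e`:
membership for ordinary atoms, entailment from `L ∪ I|_Ω ∪ ¬.Ī|_Ω` for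
FOL-formulas (including non-ordinary atoms). -/
def sat2 (I : Set Atom) : BElem L Atom → Prop
  | .atom a => (¬ kb.inOmega a ∧ a ∈ I) ∨
      (kb.inOmega a ∧ kb.totTheory I ⊨ᵇ kb.toSent a)
  | .fol φ => kb.totTheory I ⊨ᵇ φ

/-- `I ⊨_L body(r)`. -/
def satBody (I : Set Atom) (r : Rule L Atom) : Prop :=
  (∀ e ∈ r.pos, kb.sat2 I e) ∧ (∀ e ∈ r.neg, ¬ kb.sat2 I e)

/-- `I` is a model of `KB`: `I` is consistent with `L` and satisfies all
rules of `Π`. -/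
def IsModel (I : Set Atom) : Prop :=
  (kb.totTheory I).IsSatisfiable ∧
    ∀ r ∈ kb.rules, kb.satBody I r → kb.sat2 I (BElem.atom r.head)

/-- Up-to satisfaction `(E, I) ⊨_L e` of a positive body element. -/
def upSat (E I : Set Atom) (e : BElem L Atom) : Prop :=
  ∀ F : Set Atom, E ⊆ F → F ⊆ I → kb.sat2 F e

/-- `(E, I) ⊨_L body(r)`. -/
def upBody (E I : Set Atom) (r : Rule L Atom) : Prop :=
  (∀ e ∈ r.pos, kb.upSat E I e) ∧
    (∀ e ∈ r.neg, ∀ F : Set Atom, E ⊆ F → F ⊆ I → ¬ kb.sat2 F e)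

/-- `𝒯_KB(E, I) = {head(r) | r ∈ Π, (E, I) ⊨_L body(r)}`. -/
def TcOp (E I : Set Atom) : Set Atom :=
  {H | ∃ r ∈ kb.rules, r.head = H ∧ kb.upBody E I r}

/-- `𝒯^α_KB(∅, I)`: the least fixpoint of `𝒯_KB(·, I)`. -/
def Talpha (I : Set Atom) : Set Atom := sInf {E | kb.TcOp E I ⊆ E}

/-- The theory `L ∪ 𝒯^α_KB(∅, I)|_Ω ∪ ¬.Ī|_Ω`. -/
def wsTheory (I : Set Atom) : L.Theory :=
  kb.theory ∪ kb.toSent '' {a | a ∈ kb.Talpha I ∧ kb.inOmega a} ∪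
    (fun a => (kb.toSent a).not) '' {a | a ∉ I ∧ kb.inOmega a}

/-- `I` is a well-supported answer set of `KB`. -/
def IsWSAnswerSet (I : Set Atom) : Prop :=
  kb.IsModel I ∧ ∀ a ∈ I, a ∈ kb.Talpha I ∨ kb.wsTheory I ⊨ᵇ kb.toSent a

/-- The sequence `𝒯⁰ = ∅`, `𝒯^{k+1} = 𝒯_KB(𝒯^k, I)`. -/
def Titer (I : Set Atom) : ℕ → Set Atom
  | 0 => ∅
  | n + 1 => kb.TcOp (Titer I n) I

/-- The sequence `W⁰ = ∅`, `W^{k+1} = W_KB(W^k)`. -/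
def Witer : ℕ → Set (Lit Atom)
  | 0 => ∅
  | n + 1 => kb.WOp (Witer n)

/-- The sequence `E₀ = ∅`, `E_i = {H ∈ HB_Π | (𝒯^{i-1}, I) ⊨_L H}`. -/
def Eseq (I : Set Atom) : ℕ → Set Atom
  | 0 => ∅
  | n + 1 => {H | kb.upSat (kb.Titer I n) I (BElem.atom H)}

end KB

/-!
For a normal program the theory `L ∪ S|_Ω` is empty for every `S`, and since atoms are atomic
neither an atom nor its negation is valid; so every first-order condition in `T_KB`, `U_KB` and
`Z_KB` collapses, `W_KB` agrees with `W_Π` on consistent sets of literals and is the set of all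
literals on inconsistent ones. The least fixpoints then agree because `lfp(W_Π)` is consistent.
That is proved by transfinite induction along the iteration of `W_Π`: an atom derived at some
stage lies in no unfounded set relative to a consistent extension of that stage.
-/

theorem _root_.OrderHom.lfp_induction_of_isChain {α : Type*} [CompleteLattice α] (f : α →o α)
    {p : α → Prop} (step : ∀ a, p a → p (f a))
    (hchain : ∀ s : Set α, IsChain (· ≤ ·) s → (∀ a ∈ s, p a) → p (sSup s)) : p f.lfp := by
  have hstage : ∀ i, p (OrdinalApprox.lfpApprox f ⊥ i) := by
    intro i
    induction i using WellFoundedLT.induction with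
    | _ i IH =>
      have hi : OrdinalApprox.lfpApprox f ⊥ i =
          sSup ((fun j => f (OrdinalApprox.lfpApprox f ⊥ j)) '' Set.Iio i) := by
        rw [OrdinalApprox.lfpApprox, bot_sup_eq, sSup_image]
        rfl
      rw [hi]
      refine hchain _ ?_ ?_
      · exact (f.monotone.comp (OrdinalApprox.lfpApprox_mono_right f)).isChain_image
          (isChain_of_trichotomous _)
      · rintro _ ⟨j, hj, rfl⟩
        exact step _ (IH j hj)
  obtain ⟨i, hi⟩ := OrdinalApprox.lfp_mem_range_lfpApprox f
  exact hi ▸ hstage i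

theorem litConsistent_iff {S : Set (Lit Atom)} :
    LitConsistent S ↔ ∀ a, Sum.inl a ∈ S → Sum.inr a ∉ S := by
  simp [LitConsistent, litPos, litNeg, Set.eq_empty_iff_forall_notMem]

theorem litConsistent_singleton (l : Lit Atom) : LitConsistent {l} :=
  litConsistent_iff.mpr fun _ ha hna => Sum.inl_ne_inr (ha.trans hna.symm)

namespace KB

variable (kb : KB L Atom)

theorem stdT_mono : Monotone kb.StdT := by
  rintro S S' h H ⟨r, hr, hH, hpos, hneg⟩
  exact ⟨r, hr, hH, fun a ha => h (hpos a ha), fun a ha => h (hneg a ha)⟩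

variable {kb} in
theorem StdUnfounded.mono {S S' : Set (Lit Atom)} {U : Set Atom} (hU : kb.StdUnfounded S U)
    (h : S ⊆ S') : kb.StdUnfounded S' U := by
  intro a ha r hr hH
  rcases hU a ha r hr hH with ⟨b, hb, hbS | hbU⟩ | ⟨b, hb, hbS⟩
  · exact Or.inl ⟨b, hb, Or.inl (h hbS)⟩
  · exact Or.inl ⟨b, hb, Or.inr hbU⟩
  · exact Or.inr ⟨b, hb, h hbS⟩

theorem stdU_mono : Monotone kb.StdU := by
  rintro S S' h a ⟨U, hU, haU⟩
  exact ⟨U, hU.mono h, haU⟩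

theorem stdW_mono : Monotone kb.StdW := fun _ _ h =>
  Set.union_subset_union (Set.image_mono (kb.stdT_mono h)) (Set.image_mono (kb.stdU_mono h))

@[simp]
theorem inl_mem_stdW {S : Set (Lit Atom)} {a : Atom} : Sum.inl a ∈ kb.StdW S ↔ a ∈ kb.StdT S := by
  simp [StdW]

@[simp]
theorem inr_mem_stdW {S : Set (Lit Atom)} {a : Atom} : Sum.inr a ∈ kb.StdW S ↔ a ∈ kb.StdU S := by
  simp [StdW]

theorem stdW_stdWfs : kb.StdW kb.stdWfs = kb.stdWfs :=
  OrderHom.map_lfp ⟨kb.StdW, kb.stdW_mono⟩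

variable {kb} in
theorem StdUnfounded.notMem_of_mem_stdT {X T : Set (Lit Atom)} {U : Set Atom}
    (hU : kb.StdUnfounded T U) (hT : LitConsistent T) (hXT : X ⊆ T)
    (hX : ∀ b, Sum.inl b ∈ X → b ∉ U) {a : Atom} (ha : a ∈ kb.StdT X) : a ∉ U := by
  obtain ⟨r, hr, rfl, hpos, hneg⟩ := ha
  intro haU
  rcases hU _ haU r hr rfl with ⟨b, hb, hbT | hbU⟩ | ⟨b, hb, hbT⟩
  · exact litConsistent_iff.mp hT b (hXT (hpos b hb)) hbT
  · exact hX b (hpos b hb) hbU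
  · exact litConsistent_iff.mp hT b hbT (hXT (hneg b hb))

def IsSoundStage (X : Set (Lit Atom)) : Prop :=
  X ⊆ kb.StdW X ∧ LitConsistent X ∧
    ∀ T, X ⊆ T → LitConsistent T → ∀ U, kb.StdUnfounded T U → ∀ b, Sum.inl b ∈ X → b ∉ U

variable {kb} in
theorem IsSoundStage.stdW {X : Set (Lit Atom)} (hX : kb.IsSoundStage X) :
    kb.IsSoundStage (kb.StdW X) := by
  obtain ⟨hXW, hcons, hfound⟩ := hX
  refine ⟨kb.stdW_mono hXW, litConsistent_iff.mpr fun a ha hna => ?_,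
    fun T hT hTc U hU b hb => ?_⟩
  · obtain ⟨U, hU, haU⟩ := kb.inr_mem_stdW.mp hna
    exact hU.notMem_of_mem_stdT hcons subset_rfl (hfound X subset_rfl hcons U hU)
      (kb.inl_mem_stdW.mp ha) haU
  · exact hU.notMem_of_mem_stdT hTc (hXW.trans hT) (hfound T (hXW.trans hT) hTc U hU)
      (kb.inl_mem_stdW.mp hb)

variable {kb} in
theorem isSoundStage_sSup {c : Set (Set (Lit Atom))} (hc : IsChain (· ≤ ·) c)
    (h : ∀ X ∈ c, kb.IsSoundStage X) : kb.IsSoundStage (sSup c) := by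
  refine ⟨sSup_le fun X hX => (h X hX).1.trans (kb.stdW_mono (le_sSup hX)),
    litConsistent_iff.mpr ?_, ?_⟩
  · rintro a ⟨X, hX, haX⟩ ⟨Y, hY, haY⟩
    rcases hc.total hX hY with hXY | hYX
    · exact litConsistent_iff.mp (h Y hY).2.1 a (hXY haX) haY
    · exact litConsistent_iff.mp (h X hX).2.1 a haX (hYX haY)
  · rintro T hT hTc U hU b ⟨X, hX, hbX⟩
    exact (h X hX).2.2 T ((le_sSup hX).trans hT) hTc U hU b hbX

theorem stdWfs_litConsistent : LitConsistent kb.stdWfs :=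
  (OrderHom.lfp_induction_of_isChain (p := kb.IsSoundStage) ⟨kb.StdW, kb.stdW_mono⟩
    (fun _ => IsSoundStage.stdW) fun _ => isSoundStage_sSup).2.1

theorem isSatisfiable_toSent (a : Atom) : ({kb.toSent a} : L.Theory).IsSatisfiable := by
  simpa [litTheory, litPos, litNeg] using kb.atomic {Sum.inl a} (litConsistent_singleton _)

theorem isSatisfiable_not_toSent (a : Atom) :
    ({(kb.toSent a).not} : L.Theory).IsSatisfiable := by
  simpa [litTheory, litPos, litNeg] using kb.atomic {Sum.inr a} (litConsistent_singleton _)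

theorem not_empty_models_toSent (a : Atom) : ¬ (∅ : L.Theory) ⊨ᵇ kb.toSent a := by
  rw [Language.Theory.models_iff_not_satisfiable, Set.empty_union, not_not]
  exact kb.isSatisfiable_not_toSent a

theorem not_empty_models_not_toSent (a : Atom) : ¬ (∅ : L.Theory) ⊨ᵇ (kb.toSent a).not := by
  intro h
  obtain ⟨M⟩ := kb.isSatisfiable_toSent a
  exact (Language.Sentence.realize_not _).mp (h.realize_sentence M)
    (Language.Theory.model_singleton_iff.mp M.is_model)

theorem folOf_eq_empty (hΩ : ∀ a, ¬ kb.inOmega a) {s : Set (BElem L Atom)}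
    (hs : ∀ e ∈ s, ∃ a, e = BElem.atom a) : kb.folOf s = ∅ := by
  refine Set.eq_empty_of_forall_notMem fun φ hφ => ?_
  rcases hφ with hφ | ⟨a, ⟨-, ha⟩, -⟩
  · obtain ⟨a, ha⟩ := hs _ hφ
    cases ha
  · exact hΩ a ha

section Normal

variable {kb} (hN : kb.IsNormal)
include hN

theorem IsNormal.folOf_body_eq_empty {r : Rule L Atom} (hr : r ∈ kb.rules) :
    kb.folOf r.pos = ∅ ∧ kb.folOf r.neg = ∅ :=
  ⟨kb.folOf_eq_empty hN.2.1 fun e he => hN.2.2 r hr e (Or.inl he),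
    kb.folOf_eq_empty hN.2.1 fun e he => hN.2.2 r hr e (Or.inr he)⟩

theorem IsNormal.extTheory_eq_empty (S : Set (Lit Atom)) : kb.extTheory S = ∅ := by
  simp [extTheory, restrict, hN.1, hN.2.1]

theorem IsNormal.consistentWith_iff (I : Set (Lit Atom)) :
    kb.ConsistentWith I ↔ LitConsistent I := by
  simp [ConsistentWith, hN.extTheory_eq_empty, Language.Theory.isSatisfiable_empty]

theorem IsNormal.tOp_eq {I : Set (Lit Atom)} (hI : LitConsistent I) : kb.TOp I = kb.StdT I := by
  ext H
  simp only [TOp, StdT, Set.mem_ofPred_eq, (hN.consistentWith_iff I).mpr hI, not_true_eq_false,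
    false_or, hN.extTheory_eq_empty, kb.not_empty_models_toSent, or_false]
  refine exists_congr fun r => and_congr_right fun hr => and_congr_right fun _ => ?_
  obtain ⟨hpos, hneg⟩ := hN.folOf_body_eq_empty hr
  simp [hpos, hneg, hN.2.1]

theorem IsNormal.isUnfounded_iff {I : Set (Lit Atom)} (hI : LitConsistent I) (U : Set Atom) :
    kb.IsUnfounded I U ↔ kb.StdUnfounded I U := by
  simp only [IsUnfounded, UnfoundedCond, StdUnfounded, (hN.consistentWith_iff I).mpr hI,
    hN.extTheory_eq_empty, kb.not_empty_models_toSent, not_true_eq_false, false_and, or_false,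
    true_and, not_false_eq_true, implies_true, and_true]
  refine forall₂_congr fun H _ => forall₃_congr fun r hr _ => ?_
  obtain ⟨hpos, hneg⟩ := hN.folOf_body_eq_empty hr
  simp [hpos, hneg, hN.2.1]

theorem IsNormal.wOp_eq {I : Set (Lit Atom)} (hI : LitConsistent I) : kb.WOp I = kb.StdW I := by
  have hU : kb.UOp I = kb.StdU I := by
    simp only [UOp, StdU, hN.isUnfounded_iff hI]
  have hZ : kb.ZOp I = ∅ := by
    simp [ZOp, hN.extTheory_eq_empty, kb.not_empty_models_not_toSent]
  rw [WOp, StdW, hN.tOp_eq hI, hU, hZ, Set.image_empty, Set.union_empty]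

theorem IsNormal.wOp_eq_univ {I : Set (Lit Atom)} (hI : ¬ LitConsistent I) :
    kb.WOp I = Set.univ := by
  have hC : ¬ kb.ConsistentWith I := mt (hN.consistentWith_iff I).mp hI
  refine Set.eq_univ_of_forall fun l => ?_
  cases l with
  | inl a => exact Or.inl (Or.inl ⟨a, Or.inl hC, rfl⟩)
  | inr a => exact Or.inl (Or.inr ⟨a, ⟨Set.univ, Or.inr ⟨hC, rfl⟩, trivial⟩, rfl⟩)

end Normal

end KB

/-- For a normal logic program `KB = (∅, Π)`, the well-founded
semantics of `KB` coincides with the standard well-founded semantics of `Π`: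
`lfp(W_KB) = lfp(W_Π)`. -/
theorem normal_wfs_eq_stdWfs {L : FirstOrder.Language} {Atom : Type*}
    (kb : KB L Atom) (hN : kb.IsNormal) :
    kb.wfs = kb.stdWfs := by
  refine le_antisymm (sInf_le ?_) (le_sInf fun I hI => ?_)
  · show kb.WOp kb.stdWfs ⊆ kb.stdWfs
    rw [hN.wOp_eq kb.stdWfs_litConsistent, kb.stdW_stdWfs]
  · by_cases hc : LitConsistent I
    · exact sInf_le (show kb.StdW I ⊆ I from hN.wOp_eq hc ▸ hI)
    · have hpre : kb.WOp I ⊆ I := hI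
      exact fun l _ => (hN.wOp_eq_univ hc ▸ hpre) (Set.mem_univ l)

end FOLProg
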